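/- arXiv:funct-an/9704004 — 3 statements merged into one kernel-verified Lean document; each statement's English description precedes it below -/
import Mathlib

section
/- Let A be a non-degenerate algebra with a regular multiplier Hopf algebra structure (A,Δ) admitting a faithful left invariant functional φ. Then for any finite collection a₁,...,aₙ ∈ A there exists c ∈ A with c·aᵢ = aᵢ·c = aᵢ for all i (local units exist). -/
open TensorProduct LinearMap

noncomputable section

/-- Slice on the left leg: `sliceL θ (x ⊗ y) = θ x • y`, i.e. `(θ ⊙ ι)`. -/
def sliceL {M N : Type*} [AddCommGroup M] [Module ℂ M] [AddCommGroup N] [Module ℂ N]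
    (θ : M →ₗ[ℂ] ℂ) : M ⊗[ℂ] N →ₗ[ℂ] N :=
  TensorProduct.lift (LinearMap.lsmul ℂ N ∘ₗ θ)

/-- Slice on the right leg: `sliceR θ (x ⊗ y) = θ y • x`, i.e. `(ι ⊙ θ)`. -/
def sliceR {M N : Type*} [AddCommGroup M] [Module ℂ M] [AddCommGroup N] [Module ℂ N]
    (θ : N →ₗ[ℂ] ℂ) : M ⊗[ℂ] N →ₗ[ℂ] M :=
  TensorProduct.lift ((LinearMap.lsmul ℂ M ∘ₗ θ).flip)

/-- An algebraic quantum group: a regular multiplier Hopf algebra `(A, Δ)` with a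
(faithful) left invariant functional `φ`.  The comultiplication is encoded through the
canonical bijections `T1 a ⊗ b = Δ(a)(b ⊗ 1)`, `T2 (a ⊗ b) = Δ(a)(1 ⊗ b)`,
`T3 (a ⊗ b) = (b ⊗ 1)Δ(a)`, `T4 (a ⊗ b) = (1 ⊗ b)Δ(a)` together with the left and right
multiplication operators `ΔL a`/`ΔR a` by `Δ(a)` on `A ⊗ A`. -/
structure AQG (A : Type*) [NonUnitalRing A] [Module ℂ A]
    [SMulCommClass ℂ A A] [IsScalarTower ℂ A A] where
  T1 : A ⊗[ℂ] A ≃ₗ[ℂ] A ⊗[ℂ] A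
  T2 : A ⊗[ℂ] A ≃ₗ[ℂ] A ⊗[ℂ] A
  T3 : A ⊗[ℂ] A ≃ₗ[ℂ] A ⊗[ℂ] A
  T4 : A ⊗[ℂ] A ≃ₗ[ℂ] A ⊗[ℂ] A
  counit : A →ₗ[ℂ] ℂ
  S : A ≃ₗ[ℂ] A
  phi : A →ₗ[ℂ] ℂ
  rho : A ≃ₗ[ℂ] A
  ΔL : A →ₗ[ℂ] (A ⊗[ℂ] A →ₗ[ℂ] A ⊗[ℂ] A)
  ΔR : A →ₗ[ℂ] (A ⊗[ℂ] A →ₗ[ℂ] A ⊗[ℂ] A)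
  /- non-degeneracy of the algebra `A` -/
  nondeg_l : ∀ a : A, (∀ b : A, a * b = 0) → a = 0
  nondeg_r : ∀ a : A, (∀ b : A, b * a = 0) → a = 0
  /- the counit is a non-zero homomorphism with `(ε ⊙ ι)Δ = (ι ⊙ ε)Δ = ι` -/
  counit_mul : ∀ a b : A, counit (a * b) = counit a * counit b
  counit_ne : counit ≠ 0
  counit_T1 : ∀ a b : A, sliceR counit (T1 (a ⊗ₜ b)) = a * b
  counit_T2 : ∀ a b : A, sliceL counit (T2 (a ⊗ₜ b)) = a * b
  counit_T3 : ∀ a b : A, sliceR counit (T3 (a ⊗ₜ b)) = b * a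
  counit_T4 : ∀ a b : A, sliceL counit (T4 (a ⊗ₜ b)) = b * a
  /- the antipode -/
  S_mul : ∀ a b : A, S (a * b) = S b * S a
  antipode_l : ∀ a b : A,
    LinearMap.mul' ℂ A (LinearMap.rTensor A S.toLinearMap (T2 (a ⊗ₜ b))) = counit a • b
  antipode_r : ∀ a b : A,
    LinearMap.mul' ℂ A (LinearMap.lTensor A S.toLinearMap (T3 (a ⊗ₜ b))) = counit a • b
  /- `φ` is a faithful left invariant functional -/
  phi_ne : phi ≠ 0
  phi_faithful_l : ∀ a : A, (∀ b : A, phi (a * b) = 0) → a = 0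
  phi_faithful_r : ∀ a : A, (∀ b : A, phi (b * a) = 0) → a = 0
  left_inv_T1 : ∀ a b : A, sliceR phi (T1 (a ⊗ₜ b)) = phi a • b
  left_inv_T3 : ∀ a b : A, sliceR phi (T3 (a ⊗ₜ b)) = phi a • b
  /- the weak KMS automorphism `ρ`: `φ(ab) = φ(b ρ(a))` -/
  rho_mul : ∀ a b : A, rho (a * b) = rho a * rho b
  phi_kms : ∀ a b : A, phi (a * b) = phi (b * rho a)
  /- `Δ` is a (non-degenerate) homomorphism into `M(A ⊗ A)` -/
  ΔL_mul : ∀ (a b : A) (z : A ⊗[ℂ] A), ΔL (a * b) z = ΔL a (ΔL b z)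
  ΔR_mul : ∀ (a b : A) (z : A ⊗[ℂ] A), ΔR (a * b) z = ΔR b (ΔR a z)
  ΔL_assoc : ∀ (a : A) (z w : A ⊗[ℂ] A), ΔL a (z * w) = ΔL a z * w
  ΔR_assoc : ∀ (a : A) (z w : A ⊗[ℂ] A), ΔR a (z * w) = z * ΔR a w
  ΔLR : ∀ (a : A) (z w : A ⊗[ℂ] A), ΔR a z * w = z * ΔL a w
  ΔL_T1 : ∀ (a b : A) (z : A ⊗[ℂ] A),
    T1 (a ⊗ₜ b) * z = ΔL a (TensorProduct.map (LinearMap.mulLeft ℂ b) LinearMap.id z)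
  ΔL_T2 : ∀ (a b : A) (z : A ⊗[ℂ] A),
    T2 (a ⊗ₜ b) * z = ΔL a (TensorProduct.map LinearMap.id (LinearMap.mulLeft ℂ b) z)
  ΔR_T3 : ∀ (a b : A) (z : A ⊗[ℂ] A),
    z * T3 (a ⊗ₜ b) = ΔR a (TensorProduct.map (LinearMap.mulRight ℂ b) LinearMap.id z)
  ΔR_T4 : ∀ (a b : A) (z : A ⊗[ℂ] A),
    z * T4 (a ⊗ₜ b) = ΔR a (TensorProduct.map LinearMap.id (LinearMap.mulRight ℂ b) z)
  /- coassociativity of `Δ` -/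
  coassoc : ∀ a b c : A,
    (TensorProduct.assoc ℂ A A A)
        (LinearMap.rTensor A (T3.toLinearMap ∘ₗ (TensorProduct.mk ℂ A A).flip a)
          (T2 (c ⊗ₜ b)))
      = LinearMap.lTensor A (T2.toLinearMap ∘ₗ (TensorProduct.mk ℂ A A).flip b)
          (T3 (c ⊗ₜ a))

namespace AQG

variable {A : Type*} [NonUnitalRing A] [Module ℂ A]
  [SMulCommClass ℂ A A] [IsScalarTower ℂ A A] (H : AQG A)

/-- The functional `φa : x ↦ φ(x a)`; the dual algebra is `Â = {φa : a ∈ A}`. -/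
def lFun (a : A) : A →ₗ[ℂ] ℂ := H.phi ∘ₗ LinearMap.mulRight ℂ a

/-- The functional `aφ : x ↦ φ(a x)`; also `Â = {aφ : a ∈ A}`. -/
def rFun (a : A) : A →ₗ[ℂ] ℂ := H.phi ∘ₗ LinearMap.mulLeft ℂ a

/-- The right invariant functional `ψ = φ ∘ S`. -/
def psi : A →ₗ[ℂ] ℂ := H.phi ∘ₗ H.S.toLinearMap

/-- The functional `ψa : x ↦ ψ(x a)`. -/
def lFunPsi (a : A) : A →ₗ[ℂ] ℂ := H.psi ∘ₗ LinearMap.mulRight ℂ a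

/-- The right action of `Â` on `A'`: `Ract θ a = θ · (φa)`,
`(θ (φa))(x) = θ((ι ⊙ φa)Δ(x)) = θ((ι ⊙ φ)(Δ(x)(1 ⊗ a)))`. -/
def Ract (θ : A →ₗ[ℂ] ℂ) (a : A) : A →ₗ[ℂ] ℂ :=
  θ ∘ₗ sliceR H.phi ∘ₗ H.T2.toLinearMap ∘ₗ (TensorProduct.mk ℂ A A).flip a

/-- The left action of `Â` on `A'`: `Lact θ a = (φa) · θ`,
`((φa) θ)(x) = θ((φa ⊙ ι)Δ(x)) = θ((φ ⊙ ι)(Δ(x)(a ⊗ 1)))`. -/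
def Lact (θ : A →ₗ[ℂ] ℂ) (a : A) : A →ₗ[ℂ] ℂ :=
  θ ∘ₗ sliceL H.phi ∘ₗ H.T1.toLinearMap ∘ₗ (TensorProduct.mk ℂ A A).flip a

/-- `c = (ι ⊙ θ)Δ(x)` as an element of `A` (a priori it is only a multiplier). -/
def IsRSlice (θ : A →ₗ[ℂ] ℂ) (x c : A) : Prop :=
  (∀ b : A, c * b = sliceR θ (H.T1 (x ⊗ₜ b))) ∧
  (∀ b : A, b * c = sliceR θ (H.T3 (x ⊗ₜ b)))

/-- `c = (θ ⊙ ι)Δ(x)` as an element of `A`. -/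
def IsLSlice (θ : A →ₗ[ℂ] ℂ) (x c : A) : Prop :=
  (∀ b : A, c * b = sliceL θ (H.T2 (x ⊗ₜ b))) ∧
  (∀ b : A, b * c = sliceL θ (H.T4 (x ⊗ₜ b)))

/-- `θ ∈ M(Â)`: all slices `(θ ⊙ ι)Δ(x)` and `(ι ⊙ θ)Δ(x)` belong to `A`. -/
def HasSlices (θ : A →ₗ[ℂ] ℂ) : Prop :=
  ∀ x : A, (∃ c, H.IsRSlice θ x c) ∧ (∃ c, H.IsLSlice θ x c)

end AQG

end

/-!
For a single element `a`, suppose a functional `ω` kills the left ideal `A a`. Pick `b` with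
`φ b ≠ 0`. Left invariance of `φ` gives
`φ(b) ω(a) = ω((ι ⊙ φ)(Δ(b)(a ⊗ 1))) = φ((ω ⊙ ι)(Δ(b)(a ⊗ 1)))`,
and `s (ω ⊙ ι)(Δ(b)(a ⊗ 1)) = (ω ⊙ ι)(((1 ⊗ s)Δ(b))(a ⊗ 1)) = 0` for every `s`, because
`(1 ⊗ s)Δ(b)` lies in `A ⊙ A` and `ω` kills `A a`. By non-degeneracy `ω(a) = 0`, so `a ∈ A a`;
symmetrically `a ∈ a A`. A finite family then has a common left unit `e₁ + e₂ - e₂ e₁` by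
induction, a common right unit likewise, and a left unit `e` and a right unit `f` combine into
the two-sided unit `e + f - f e`.
-/

section NonUnitalRing

variable {R : Type*} [NonUnitalRing R]

theorem exists_left_unit_of_finset (h : ∀ a : R, ∃ e, e * a = a) {ι : Type*}
    (s : Finset ι) (a : ι → R) : ∃ e : R, ∀ i ∈ s, e * a i = a i := by
  classical
  induction s using Finset.induction_on with
  | empty => exact ⟨0, by simp⟩
  | insert j s _ ih =>
    obtain ⟨e₁, he₁⟩ := ih
    obtain ⟨e₂, he₂⟩ := h (a j - e₁ * a j)
    refine ⟨e₁ + e₂ - e₂ * e₁, fun i hi => ?_⟩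
    have defect : (e₁ + e₂ - e₂ * e₁) * a i - a i = e₂ * (a i - e₁ * a i) - (a i - e₁ * a i) := by
      noncomm_ring
    rw [← sub_eq_zero, defect]
    rcases Finset.mem_insert.mp hi with rfl | hi
    · rw [he₂, sub_self]
    · rw [he₁ i hi, sub_self, mul_zero, sub_self]

theorem exists_right_unit_of_finset (h : ∀ a : R, ∃ f, a * f = a) {ι : Type*}
    (s : Finset ι) (a : ι → R) : ∃ f : R, ∀ i ∈ s, a i * f = a i := by
  have hop : ∀ a : Rᵐᵒᵖ, ∃ e, e * a = a := fun a =>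
    let ⟨f, hf⟩ := h a.unop
    ⟨MulOpposite.op f, MulOpposite.unop_injective hf⟩
  obtain ⟨e, he⟩ := exists_left_unit_of_finset hop s (MulOpposite.op ∘ a)
  exact ⟨e.unop, fun i hi => MulOpposite.op_injective (he i hi)⟩

theorem exists_two_sided_unit_of_finset (hl : ∀ a : R, ∃ e, e * a = a)
    (hr : ∀ a : R, ∃ f, a * f = a) {ι : Type*} (s : Finset ι) (a : ι → R) :
    ∃ c : R, ∀ i ∈ s, c * a i = a i ∧ a i * c = a i := by
  obtain ⟨e, he⟩ := exists_left_unit_of_finset hl s a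
  obtain ⟨f, hf⟩ := exists_right_unit_of_finset hr s a
  refine ⟨e + f - f * e, fun i hi => ⟨?_, ?_⟩⟩
  · have : (e + f - f * e) * a i = e * a i + f * a i - f * (e * a i) := by noncomm_ring
    rw [this, he i hi, add_sub_cancel_right]
  · have : a i * (e + f - f * e) = a i * e + a i * f - a i * f * e := by noncomm_ring
    rw [this, hf i hi, add_sub_cancel_left]

end NonUnitalRing

theorem LinearMap.mem_range_of_forall_dual {K V W : Type*} [Field K] [AddCommGroup V]
    [Module K V] [AddCommGroup W] [Module K W] (f : W →ₗ[K] V) (v : V)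
    (h : ∀ ω : Module.Dual K V, ω ∘ₗ f = 0 → ω v = 0) : v ∈ range f := by
  rw [← Subspace.forall_mem_dualAnnihilator_apply_eq_zero_iff]
  intro ω hω
  exact h ω (LinearMap.ext fun x => (Submodule.mem_dualAnnihilator ω).mp hω _ ⟨x, rfl⟩)

section Slices

variable {M M' N N' : Type*} [AddCommGroup M] [Module ℂ M] [AddCommGroup M'] [Module ℂ M']
  [AddCommGroup N] [Module ℂ N] [AddCommGroup N'] [Module ℂ N']

@[simp] theorem sliceL_tmul (ω : M →ₗ[ℂ] ℂ) (x : M) (y : N) :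
    sliceL ω (x ⊗ₜ[ℂ] y) = ω x • y := by simp [sliceL]

@[simp] theorem sliceR_tmul (θ : N →ₗ[ℂ] ℂ) (x : M) (y : N) :
    sliceR θ (x ⊗ₜ[ℂ] y) = θ y • x := by simp [sliceR]

@[simp] theorem sliceL_zero : sliceL (0 : M →ₗ[ℂ] ℂ) = (0 : M ⊗[ℂ] N →ₗ[ℂ] N) := by
  ext
  simp

theorem apply_sliceR (ω : M →ₗ[ℂ] ℂ) (θ : N →ₗ[ℂ] ℂ) (z : M ⊗[ℂ] N) :
    ω (sliceR θ z) = θ (sliceL ω z) := by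
  induction z using TensorProduct.induction_on with
  | zero => simp
  | tmul u v => simp [mul_comm]
  | add x y hx hy => simp [hx, hy]

theorem sliceL_comp (ω : M →ₗ[ℂ] ℂ) (f : M' →ₗ[ℂ] M) (z : M' ⊗[ℂ] N) :
    sliceL (ω ∘ₗ f) z = sliceL ω (map f id z) := by
  induction z using TensorProduct.induction_on with
  | zero => simp
  | tmul u v => simp
  | add x y hx hy => simp [hx, hy]

theorem sliceL_map_id (ω : M →ₗ[ℂ] ℂ) (f : N →ₗ[ℂ] N') (z : M ⊗[ℂ] N) :
    sliceL ω (map id f z) = f (sliceL ω z) := by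
  induction z using TensorProduct.induction_on with
  | zero => simp
  | tmul u v => simp
  | add x y hx hy => simp [hx, hy]

theorem eq_zero_of_forall_sliceL_eq_zero (z : M ⊗[ℂ] N)
    (h : ∀ ω : Module.Dual ℂ M, sliceL ω z = 0) : z = 0 := by
  classical
  set B := Module.Basis.ofVectorSpace ℂ M
  set C := Module.Basis.ofVectorSpace ℂ N
  have repr_eq : ∀ i j (w : M ⊗[ℂ] N),
      (B.tensorProduct C).repr w (i, j) = C.coord j (sliceL (B.coord i) w) := by
    intro i j w
    induction w using TensorProduct.induction_on with
    | zero => simp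
    | tmul u v => simp [Module.Basis.tensorProduct_repr_tmul_apply, mul_comm]
    | add x y hx hy => simp [hx, hy]
  apply (B.tensorProduct C).repr.injective
  ext ⟨i, j⟩
  simp [repr_eq, h]

end Slices

section TensorAlgebra

variable {A : Type*} [NonUnitalRing A] [Module ℂ A] [SMulCommClass ℂ A A] [IsScalarTower ℂ A A]

-- `A` has no unit, so right multiplication by the multiplier `1 ⊗ s` of `A ⊗ A` is encoded as
-- `map id (mulRight ℂ s)`, and similarly for `1 ⊗ s` on the left and `a ⊗ 1`.
theorem sliceR_mul_tmul (θ : A →ₗ[ℂ] ℂ) (z : A ⊗[ℂ] A) (r s : A) :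
    sliceR θ (z * (r ⊗ₜ[ℂ] s)) = sliceR (θ ∘ₗ mulRight ℂ s) z * r := by
  induction z using TensorProduct.induction_on with
  | zero => simp
  | tmul u v => simp [Algebra.TensorProduct.tmul_mul_tmul, smul_mul_assoc]
  | add x y hx hy => simp [add_mul, hx, hy]

theorem sliceR_tmul_mul (θ : A →ₗ[ℂ] ℂ) (z : A ⊗[ℂ] A) (r s : A) :
    sliceR θ ((r ⊗ₜ[ℂ] s) * z) = r * sliceR (θ ∘ₗ mulLeft ℂ s) z := by
  induction z using TensorProduct.induction_on with
  | zero => simp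
  | tmul u v => simp [Algebra.TensorProduct.tmul_mul_tmul, mul_smul_comm]
  | add x y hx hy => simp [mul_add, hx, hy]

theorem TensorProduct.eq_zero_of_forall_mul_eq_zero (hA : ∀ a : A, (∀ b : A, a * b = 0) → a = 0)
    (z : A ⊗[ℂ] A) (h : ∀ w, z * w = 0) : z = 0 := by
  have hR : ∀ (θ : Module.Dual ℂ A) s, sliceR (θ ∘ₗ mulRight ℂ s) z = 0 := fun θ s =>
    hA _ fun r => by rw [← sliceR_mul_tmul, h, map_zero]
  refine eq_zero_of_forall_sliceL_eq_zero z fun ω => hA _ fun s => ?_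
  refine (Module.forall_dual_apply_eq_zero_iff ℂ _).mp fun θ => ?_
  simpa [apply_sliceR] using congrArg ω (hR θ s)

theorem TensorProduct.eq_zero_of_forall_mul_eq_zero' (hA : ∀ a : A, (∀ b : A, b * a = 0) → a = 0)
    (z : A ⊗[ℂ] A) (h : ∀ w, w * z = 0) : z = 0 := by
  have hR : ∀ (θ : Module.Dual ℂ A) s, sliceR (θ ∘ₗ mulLeft ℂ s) z = 0 := fun θ s =>
    hA _ fun r => by rw [← sliceR_tmul_mul, h, map_zero]
  refine eq_zero_of_forall_sliceL_eq_zero z fun ω => hA _ fun s => ?_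
  refine (Module.forall_dual_apply_eq_zero_iff ℂ _).mp fun θ => ?_
  simpa [apply_sliceR] using congrArg ω (hR θ s)

theorem map_id_mulRight_mul (s : A) (y z : A ⊗[ℂ] A) :
    map id (mulRight ℂ s) y * z = y * map id (mulLeft ℂ s) z := by
  induction y using TensorProduct.induction_on with
  | zero => simp
  | add p q hp hq => simp [add_mul, hp, hq]
  | tmul u v => induction z using TensorProduct.induction_on <;>
      simp_all [mul_add, Algebra.TensorProduct.tmul_mul_tmul, mul_assoc]

theorem map_mulRight_id_mul (a : A) (y z : A ⊗[ℂ] A) :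
    map (mulRight ℂ a) id y * z = y * map (mulLeft ℂ a) id z := by
  induction y using TensorProduct.induction_on with
  | zero => simp
  | add p q hp hq => simp [add_mul, hp, hq]
  | tmul u v => induction z using TensorProduct.induction_on <;>
      simp_all [mul_add, Algebra.TensorProduct.tmul_mul_tmul, mul_assoc]

theorem mul_map_id_mulRight (s : A) (y z : A ⊗[ℂ] A) :
    y * map id (mulRight ℂ s) z = map id (mulRight ℂ s) (y * z) := by
  induction y using TensorProduct.induction_on with
  | zero => simp
  | add p q hp hq => simp [add_mul, hp, hq]
  | tmul u v => induction z using TensorProduct.induction_on <;>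
      simp_all [mul_add, Algebra.TensorProduct.tmul_mul_tmul, mul_assoc]

theorem map_id_mulLeft_mul (s : A) (y z : A ⊗[ℂ] A) :
    map id (mulLeft ℂ s) y * z = map id (mulLeft ℂ s) (y * z) := by
  induction y using TensorProduct.induction_on with
  | zero => simp
  | add p q hp hq => simp [add_mul, hp, hq]
  | tmul u v => induction z using TensorProduct.induction_on <;>
      simp_all [mul_add, Algebra.TensorProduct.tmul_mul_tmul, mul_assoc]

end TensorAlgebra

namespace AQG

variable {A : Type*} [NonUnitalRing A] [Module ℂ A] [SMulCommClass ℂ A A] [IsScalarTower ℂ A A]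

theorem map_id_mulRight_ΔR (H : AQG A) (b s : A) (w : A ⊗[ℂ] A) :
    map id (mulRight ℂ s) (H.ΔR b w) = w * H.T2 (b ⊗ₜ s) := by
  refine sub_eq_zero.mp <| TensorProduct.eq_zero_of_forall_mul_eq_zero H.nondeg_l _ fun z => ?_
  rw [sub_mul, sub_eq_zero, map_id_mulRight_mul, H.ΔLR, ← H.ΔL_T2, mul_assoc]

theorem map_id_mulLeft_ΔL (H : AQG A) (b s : A) (z : A ⊗[ℂ] A) :
    map id (mulLeft ℂ s) (H.ΔL b z) = H.T4 (b ⊗ₜ s) * z := by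
  refine sub_eq_zero.mp <| TensorProduct.eq_zero_of_forall_mul_eq_zero' H.nondeg_r _ fun w => ?_
  rw [mul_sub, sub_eq_zero, ← map_id_mulRight_mul, ← H.ΔLR, ← mul_assoc, H.ΔR_T4]

theorem map_id_mulRight_T3 (H : AQG A) (a b s : A) :
    map id (mulRight ℂ s) (H.T3 (b ⊗ₜ a)) = map (mulLeft ℂ a) id (H.T2 (b ⊗ₜ s)) := by
  refine sub_eq_zero.mp <| TensorProduct.eq_zero_of_forall_mul_eq_zero' H.nondeg_r _ fun w => ?_
  rw [mul_sub, sub_eq_zero, mul_map_id_mulRight, H.ΔR_T3, map_id_mulRight_ΔR,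
    ← map_mulRight_id_mul]

theorem map_id_mulLeft_T1 (H : AQG A) (a b s : A) :
    map id (mulLeft ℂ s) (H.T1 (b ⊗ₜ a)) = map (mulRight ℂ a) id (H.T4 (b ⊗ₜ s)) := by
  refine sub_eq_zero.mp <| TensorProduct.eq_zero_of_forall_mul_eq_zero H.nondeg_l _ fun z => ?_
  rw [sub_mul, sub_eq_zero, map_id_mulLeft_mul, H.ΔL_T1, map_id_mulLeft_ΔL, map_mulRight_id_mul]

theorem apply_eq_zero_of_comp_mulRight_eq_zero (H : AQG A) (ω : A →ₗ[ℂ] ℂ) (a : A)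
    (h : ω ∘ₗ mulRight ℂ a = 0) : ω a = 0 := by
  obtain ⟨b, hb⟩ : ∃ b, H.phi b ≠ 0 := DFunLike.ne_iff.mp H.phi_ne
  have hslice : sliceL ω (H.T1 (b ⊗ₜ a)) = 0 := H.nondeg_r _ fun s => by
    rw [← mulLeft_apply (R := ℂ), ← sliceL_map_id, H.map_id_mulLeft_T1, ← sliceL_comp, h,
      sliceL_zero, LinearMap.zero_apply]
  have := apply_sliceR ω H.phi (H.T1 (b ⊗ₜ a))
  rw [hslice, H.left_inv_T1, map_smul, map_zero, smul_eq_mul] at this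
  exact (mul_eq_zero.mp this).resolve_left hb

theorem apply_eq_zero_of_comp_mulLeft_eq_zero (H : AQG A) (ω : A →ₗ[ℂ] ℂ) (a : A)
    (h : ω ∘ₗ mulLeft ℂ a = 0) : ω a = 0 := by
  obtain ⟨b, hb⟩ : ∃ b, H.phi b ≠ 0 := DFunLike.ne_iff.mp H.phi_ne
  have hslice : sliceL ω (H.T3 (b ⊗ₜ a)) = 0 := H.nondeg_l _ fun s => by
    rw [← mulRight_apply (R := ℂ), ← sliceL_map_id, H.map_id_mulRight_T3, ← sliceL_comp, h,
      sliceL_zero, LinearMap.zero_apply]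
  have := apply_sliceR ω H.phi (H.T3 (b ⊗ₜ a))
  rw [hslice, H.left_inv_T3, map_smul, map_zero, smul_eq_mul] at this
  exact (mul_eq_zero.mp this).resolve_left hb

theorem exists_left_unit (H : AQG A) (a : A) : ∃ e : A, e * a = a :=
  LinearMap.mem_range_of_forall_dual _ a fun ω => H.apply_eq_zero_of_comp_mulRight_eq_zero ω a

theorem exists_right_unit (H : AQG A) (a : A) : ∃ f : A, a * f = a :=
  LinearMap.mem_range_of_forall_dual _ a fun ω => H.apply_eq_zero_of_comp_mulLeft_eq_zero ω a

end AQG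

/-- In an algebraic quantum group, every finite collection of elements
admits a local unit. -/
theorem AQG.local_units {A : Type*} [NonUnitalRing A] [Module ℂ A]
    [SMulCommClass ℂ A A] [IsScalarTower ℂ A A] (H : AQG A)
    (n : ℕ) (a : Fin n → A) :
    ∃ c : A, ∀ i : Fin n, c * a i = a i ∧ a i * c = a i := by
  obtain ⟨c, hc⟩ := exists_two_sided_unit_of_finset H.exists_left_unit H.exists_right_unit
    Finset.univ a
  exact ⟨c, fun i => hc i (Finset.mem_univ i)⟩
end

section
/- Let (A,Δ) be an algebraic quantum group with left Haar functional φ, antipode S, and dual Â. If θ ∈ A' satisfies θω = 0 for every ω ∈ Â, then θ = 0. -/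
open TensorProduct LinearMap

/-- If `θ ∈ A'` satisfies `θ ω = 0` for every `ω ∈ Â`, then `θ = 0`. -/
theorem AQG.dual_separates {A : Type*} [NonUnitalRing A] [Module ℂ A]
    [SMulCommClass ℂ A A] [IsScalarTower ℂ A A] (H : AQG A)
    (θ : A →ₗ[ℂ] ℂ) (h : ∀ a : A, H.Ract θ a = 0) :
    θ = 0 := by
  obtain ⟨d, hd⟩ : ∃ d : A, H.phi d ≠ 0 := by
    by_contra hc
    push_neg at hc
    exact H.phi_ne (LinearMap.ext fun x => hc x)
  ext c
  have hz : ∀ z : A ⊗[ℂ] A, θ (sliceR H.phi (H.T2 z)) = 0 := by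
    intro z
    induction z using TensorProduct.induction_on with
    | zero => simp
    | tmul x a =>
      have := congrFun (congrArg DFunLike.coe (h a)) x
      simpa [AQG.Ract, TensorProduct.mk] using this
    | add u v hu hv => simp [map_add, hu, hv]
  have key : θ (sliceR H.phi (c ⊗ₜ[ℂ] d)) = 0 := by
    simpa using hz (H.T2.symm (c ⊗ₜ[ℂ] d))
  have : sliceR H.phi (c ⊗ₜ[ℂ] d) = H.phi d • c := by
    simp [sliceR]
  rw [this] at key
  simp only [map_smul, smul_eq_mul] at key
  simpa using (mul_eq_zero.mp key).resolve_left hd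
end

section
/- Let (A,Δ) be an algebraic quantum group, B a non-degenerate algebra, and V ∈ M(A⊙B). Then V = 0 if and only if (ω⊙ι)(V) = 0 for every ω ∈ Â. -/
open TensorProduct LinearMap

noncomputable section

/-- A (two-sided) multiplier of a non-degenerate algebra `C`. -/
structure Mult (C : Type*) [NonUnitalRing C] [Module ℂ C]
    [SMulCommClass ℂ C C] [IsScalarTower ℂ C C] where
  L : C →ₗ[ℂ] C
  R : C →ₗ[ℂ] C
  mid : ∀ x y : C, R x * y = x * L y
  Lmul : ∀ x y : C, L (x * y) = L x * y
  Rmul : ∀ x y : C, R (x * y) = x * R y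

/-- `W = V⁻¹` in `M(C)`. -/
def Mult.Inverts {C : Type*} [NonUnitalRing C] [Module ℂ C]
    [SMulCommClass ℂ C C] [IsScalarTower ℂ C C] (V W : Mult C) : Prop :=
  (∀ z, V.L (W.L z) = z) ∧ (∀ z, W.L (V.L z) = z) ∧
  (∀ z, V.R (W.R z) = z) ∧ (∀ z, W.R (V.R z) = z)

namespace AQG

variable {A : Type*} [NonUnitalRing A] [Module ℂ A]
  [SMulCommClass ℂ A A] [IsScalarTower ℂ A A] (H : AQG A)
variable {B : Type*} [NonUnitalRing B] [Module ℂ B]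
  [SMulCommClass ℂ B B] [IsScalarTower ℂ B B]

/-- The left action of `(Δ ⊙ ι)(z)` on `A ⊗ A ⊗ B`, for `z ∈ A ⊗ B`:
`(Δ(a) ⊗ b)·(u ⊗ c) = (Δ(a)u) ⊗ (bc)`. -/
def piDL : A ⊗[ℂ] B →ₗ[ℂ] ((A ⊗[ℂ] A) ⊗[ℂ] B →ₗ[ℂ] (A ⊗[ℂ] A) ⊗[ℂ] B) :=
  TensorProduct.lift
    (((TensorProduct.mapBilinear (σ₁₂ := RingHom.id ℂ) (M := A ⊗[ℂ] A) (N := B) (M₂ := A ⊗[ℂ] A) (N₂ := B)).comp H.ΔL).compl₂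
      (LinearMap.mul ℂ B))

/-- The right action of `(Δ ⊙ ι)(z)` on `A ⊗ A ⊗ B`. -/
def piDR : A ⊗[ℂ] B →ₗ[ℂ] ((A ⊗[ℂ] A) ⊗[ℂ] B →ₗ[ℂ] (A ⊗[ℂ] A) ⊗[ℂ] B) :=
  TensorProduct.lift
    (((TensorProduct.mapBilinear (σ₁₂ := RingHom.id ℂ) (M := A ⊗[ℂ] A) (N := B) (M₂ := A ⊗[ℂ] A) (N₂ := B)).comp H.ΔR).compl₂
      ((LinearMap.mul ℂ B).flip))

/-- The leg-numbering map `V ↦ V₂₃` for the left action. -/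
def leg23 (f : A ⊗[ℂ] B →ₗ[ℂ] A ⊗[ℂ] B) :
    (A ⊗[ℂ] A) ⊗[ℂ] B →ₗ[ℂ] (A ⊗[ℂ] A) ⊗[ℂ] B :=
  (TensorProduct.assoc ℂ A A B).symm.toLinearMap ∘ₗ
    (LinearMap.lTensor A f) ∘ₗ (TensorProduct.assoc ℂ A A B).toLinearMap

/-- The flip of the first two legs of `A ⊗ A ⊗ B`. -/
def swap12 : (A ⊗[ℂ] A) ⊗[ℂ] B ≃ₗ[ℂ] (A ⊗[ℂ] A) ⊗[ℂ] B :=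
  TensorProduct.congr (TensorProduct.comm ℂ A A) (LinearEquiv.refl ℂ B)

/-- The leg-numbering map `V ↦ V₁₃`. -/
def leg13 (f : A ⊗[ℂ] B →ₗ[ℂ] A ⊗[ℂ] B) :
    (A ⊗[ℂ] A) ⊗[ℂ] B →ₗ[ℂ] (A ⊗[ℂ] A) ⊗[ℂ] B :=
  (swap12 (A := A) (B := B)).toLinearMap ∘ₗ leg23 f ∘ₗ
    (swap12 (A := A) (B := B)).toLinearMap

/-- `V ∈ M(A ⊙ B)` is a corepresentation of `(A, Δ)` on `B`:
`(Δ ⊙ ι)(V) = V₁₃ V₂₃` in `M(A ⊙ A ⊙ B)`, expressed on the (spanning) elements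
`(Δ ⊙ ι)(z) w` and `w (Δ ⊙ ι)(z)`. -/
def IsCorep (V : Mult (A ⊗[ℂ] B)) : Prop :=
  (∀ (z : A ⊗[ℂ] B) (w : (A ⊗[ℂ] A) ⊗[ℂ] B),
    H.piDL (V.L z) w = leg13 V.L (leg23 V.L (H.piDL z w))) ∧
  (∀ (z : A ⊗[ℂ] B) (w : (A ⊗[ℂ] A) ⊗[ℂ] B),
    H.piDR (V.R z) w = leg23 V.R (leg13 V.R (H.piDR z w)))

end AQG

end

/-! For `w ∈ A ⊙ B`, `(φ(· p) ⊙ ι)(w) q = (φ ⊙ ι)(w (p ⊗ q))`. Hence if all the right-hand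
sides vanish, non-degeneracy of `B` kills every slice by `φ(· p)`, and faithfulness of `φ`,
applied to the coefficients of `w` in a basis of `B`, gives `w = 0`. This applies to
`w = V(a ⊗ x)`, since `V(a ⊗ x)(p ⊗ q) = V(ap ⊗ xq)`, and then to `w = zV`, since
`(zV)(p ⊗ q) = z V(p ⊗ q) = 0`. -/

@[simp]
lemma sliceL_tmul_s13 {M N : Type*} [AddCommGroup M] [Module ℂ M] [AddCommGroup N] [Module ℂ N]
    (θ : M →ₗ[ℂ] ℂ) (m : M) (n : N) : sliceL θ (m ⊗ₜ n) = θ m • n := by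
  simp [sliceL]

lemma apply_sliceL_eq_apply_rid_lTensor {M N : Type*} [AddCommGroup M] [Module ℂ M]
    [AddCommGroup N] [Module ℂ N] (θ : M →ₗ[ℂ] ℂ) (χ : N →ₗ[ℂ] ℂ) (z : M ⊗[ℂ] N) :
    χ (sliceL θ z) = θ (TensorProduct.rid ℂ M (χ.lTensor M z)) := by
  induction z using TensorProduct.induction_on with
  | zero => simp
  | tmul m n => simp [mul_comm]
  | add u v hu hv => simp [hu, hv]

lemma eq_zero_of_forall_sliceL_eq_zero_s13 {ι M N : Type*} [AddCommGroup M] [Module ℂ M]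
    [AddCommGroup N] [Module ℂ N] (θ : ι → M →ₗ[ℂ] ℂ)
    (hθ : ∀ m, (∀ i, θ i m = 0) → m = 0) {z : M ⊗[ℂ] N} (hz : ∀ i, sliceL (θ i) z = 0) :
    z = 0 := by
  classical
  let 𝒞 := Module.Basis.ofVectorSpace ℂ N
  suffices TensorProduct.equivFinsuppOfBasisRight 𝒞 z = 0 from
    (TensorProduct.equivFinsuppOfBasisRight 𝒞).map_eq_zero_iff.mp this
  ext k
  refine hθ _ fun i => ?_
  rw [TensorProduct.equivFinsuppOfBasisRight_apply, ← apply_sliceL_eq_apply_rid_lTensor, hz,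
    map_zero]

lemma sliceL_comp_mulRight_mul {A B : Type*} [NonUnitalRing A] [Module ℂ A]
    [SMulCommClass ℂ A A] [IsScalarTower ℂ A A] [NonUnitalRing B] [Module ℂ B]
    [SMulCommClass ℂ B B] [IsScalarTower ℂ B B] (θ : A →ₗ[ℂ] ℂ) (p : A) (q : B)
    (w : A ⊗[ℂ] B) :
    sliceL (θ ∘ₗ LinearMap.mulRight ℂ p) w * q = sliceL θ (w * (p ⊗ₜ q)) := by
  induction w using TensorProduct.induction_on with
  | zero => simp
  | tmul a x => simp [Algebra.TensorProduct.tmul_mul_tmul, smul_mul_assoc]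
  | add u v hu hv => rw [map_add, add_mul, hu, hv, add_mul, map_add]

lemma AQG.eq_zero_of_forall_sliceL_phi_mul_eq_zero {A : Type*} [NonUnitalRing A] [Module ℂ A]
    [SMulCommClass ℂ A A] [IsScalarTower ℂ A A] (H : AQG A)
    {B : Type*} [NonUnitalRing B] [Module ℂ B] [SMulCommClass ℂ B B] [IsScalarTower ℂ B B]
    (hB : ∀ b : B, (∀ b' : B, b * b' = 0) → b = 0) {w : A ⊗[ℂ] B}
    (hw : ∀ (p : A) (q : B), sliceL H.phi (w * (p ⊗ₜ q)) = 0) : w = 0 :=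
  eq_zero_of_forall_sliceL_eq_zero_s13 H.lFun H.phi_faithful_l fun p =>
    hB _ fun q => (sliceL_comp_mulRight_mul H.phi p q w).trans (hw p q)

theorem AQG.slice_separates_general {A : Type*} [NonUnitalRing A] [Module ℂ A]
    [SMulCommClass ℂ A A] [IsScalarTower ℂ A A] (H : AQG A)
    {B : Type*} [NonUnitalRing B] [Module ℂ B]
    [SMulCommClass ℂ B B] [IsScalarTower ℂ B B]
    (hBl : ∀ b : B, (∀ b' : B, b * b' = 0) → b = 0)
    (V : Mult (A ⊗[ℂ] B)) :
    (V.L = 0 ∧ V.R = 0) ↔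
      ∀ (a : A) (x : B), sliceL H.phi (V.L (a ⊗ₜ x)) = 0 := by
  refine ⟨fun ⟨hL, _⟩ a x => by simp [hL], fun h => ?_⟩
  have hL : V.L = 0 := TensorProduct.ext' fun a x =>
    H.eq_zero_of_forall_sliceL_phi_mul_eq_zero hBl fun p q => by
      rw [← V.Lmul, Algebra.TensorProduct.tmul_mul_tmul]
      exact h _ _
  refine ⟨hL, LinearMap.ext fun z => H.eq_zero_of_forall_sliceL_phi_mul_eq_zero hBl fun p q => ?_⟩
  rw [V.mid, hL, LinearMap.zero_apply, mul_zero, map_zero]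

/-- For `V ∈ M(A ⊙ B)`: `V = 0` iff `(ω ⊙ ι)(V) = 0` for every
`ω = aφ ∈ Â`, where `(aφ ⊙ ι)(V) x = (φ ⊙ ι)(V(a ⊗ x))`. -/
theorem AQG.slice_separates {A : Type*} [NonUnitalRing A] [Module ℂ A]
    [SMulCommClass ℂ A A] [IsScalarTower ℂ A A] (H : AQG A)
    {B : Type*} [NonUnitalRing B] [Module ℂ B]
    [SMulCommClass ℂ B B] [IsScalarTower ℂ B B]
    (hBl : ∀ b : B, (∀ b' : B, b * b' = 0) → b = 0)
    (hBr : ∀ b : B, (∀ b' : B, b' * b = 0) → b = 0)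
    (V : Mult (A ⊗[ℂ] B)) :
    (V.L = 0 ∧ V.R = 0) ↔
      ∀ (a : A) (x : B), sliceL H.phi (V.L (a ⊗ₜ x)) = 0 :=
  AQG.slice_separates_general H hBl V
end
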